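/- Under the NormalHedge dynamics, the scale parameter grows at most geometrically: for every round t ≥ 1, c_{t+1} ≤ 2c_t(1 + ln N) + 3. (Lemma 2.) -/

import Mathlib

/-!
At every round `t ≥ 1` the normalisation `(1/N) ∑ exp(R⁺²/(2c)) = e` pins the positive regrets
between two bounds: no single term can exceed the whole sum `N e`, so `(R⁺_{i,t})² ≤ 2 c_t (1 + ln N)`
for every `i`, and the terms cannot all be below their mean `e`, so `2 c_t ≤ (R⁺_{i,t})²` for some `i`.
Since the weights are a probability vector, the learner's loss is at most `1` and each regret
grows by at most `1` per round. Applying the lower bound at `t + 1` and the upper bound at `t`,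
`2 c_{t+1} ≤ (R⁺_{i,t} + 1)² ≤ 2 (R⁺_{i,t})² + 2 ≤ 4 c_t (1 + ln N) + 2`.
-/

open Real Finset Filter

/-- The NormalHedge dynamics with `N` actions.  Rounds are indexed by `t = 1, 2, …`;
`loss i t` is the loss of action `i` in round `t`, `p i t` its weight in round `t`,
`R i t` its cumulative regret after `t` rounds, and `c t` the scale parameter. -/
structure NormalHedge (N : ℕ) where
  hN : 2 ≤ N
  loss : Fin N → ℕ → ℝ
  p : Fin N → ℕ → ℝ
  R : Fin N → ℕ → ℝ
  c : ℕ → ℝ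
  loss_mem : ∀ i t, 1 ≤ t → loss i t ∈ Set.Icc (0 : ℝ) 1
  p_one : ∀ i, p i 1 = 1 / N
  R_zero : ∀ i, R i 0 = 0
  R_rec : ∀ i t, R i (t + 1) = R i t + ((∑ j, p j (t + 1) * loss j (t + 1)) - loss i (t + 1))
  c_pos : ∀ t, 1 ≤ t → 0 < c t
  c_eq : ∀ t, 1 ≤ t →
    (1 / N : ℝ) * ∑ i, Real.exp (max (R i t) 0 ^ 2 / (2 * c t)) = Real.exp 1
  p_rec : ∀ i t, 1 ≤ t →
    p i (t + 1) = (max (R i t) 0 / c t) * Real.exp (max (R i t) 0 ^ 2 / (2 * c t)) /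
      ∑ j, (max (R j t) 0 / c t) * Real.exp (max (R j t) 0 ^ 2 / (2 * c t))

namespace NormalHedge

variable {N : ℕ} (H : NormalHedge N) {t : ℕ}

/-- The paper's `w_{i,t}`. -/
noncomputable def weight (i : Fin N) (t : ℕ) : ℝ :=
  (max (H.R i t) 0 / H.c t) * exp (max (H.R i t) 0 ^ 2 / (2 * H.c t))

lemma sum_exp_eq (ht : 1 ≤ t) :
    ∑ i, exp (max (H.R i t) 0 ^ 2 / (2 * H.c t)) = N * exp 1 := by
  have hN : (N : ℝ) ≠ 0 := by exact_mod_cast (zero_lt_two.trans_le H.hN).ne'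
  rw [← H.c_eq t ht]
  field_simp

lemma sq_max_R_le (ht : 1 ≤ t) (i : Fin N) :
    max (H.R i t) 0 ^ 2 ≤ 2 * H.c t * (1 + log N) := by
  have hN : (0 : ℝ) < N := by exact_mod_cast zero_lt_two.trans_le H.hN
  have hterm : exp (max (H.R i t) 0 ^ 2 / (2 * H.c t)) ≤ exp (1 + log N) := by
    rw [exp_add, exp_log hN, mul_comm (exp 1), ← H.sum_exp_eq ht]
    exact single_le_sum (f := fun j => exp (max (H.R j t) 0 ^ 2 / (2 * H.c t)))
      (fun j _ => (exp_pos _).le) (mem_univ i)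
  rw [exp_le_exp, div_le_iff₀ (by linarith [H.c_pos t ht])] at hterm
  linarith

lemma exists_two_mul_c_le_sq (ht : 1 ≤ t) : ∃ i, 2 * H.c t ≤ max (H.R i t) 0 ^ 2 := by
  have : Nonempty (Fin N) := ⟨⟨0, zero_lt_two.trans_le H.hN⟩⟩
  obtain ⟨i, -, hi⟩ := exists_le_of_sum_le (s := univ) (f := fun _ => exp 1)
    (g := fun i => exp (max (H.R i t) 0 ^ 2 / (2 * H.c t))) univ_nonempty
    (by rw [H.sum_exp_eq ht, sum_const, card_univ, Fintype.card_fin, nsmul_eq_mul])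
  refine ⟨i, ?_⟩
  rwa [exp_le_exp, one_le_div₀ (by linarith [H.c_pos t ht])] at hi

lemma weight_nonneg (ht : 1 ≤ t) (i : Fin N) : 0 ≤ H.weight i t := by
  have := H.c_pos t ht
  unfold weight
  positivity

lemma sum_weight_pos (ht : 1 ≤ t) : 0 < ∑ j, H.weight j t := by
  obtain ⟨i, hi⟩ := H.exists_two_mul_c_le_sq ht
  have hc := H.c_pos t ht
  have hR : 0 < max (H.R i t) 0 := by
    by_contra! h
    nlinarith [le_antisymm h (le_max_right (H.R i t) 0)]
  exact (mul_pos (div_pos hR hc) (exp_pos _)).trans_le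
    (single_le_sum (fun j _ => H.weight_nonneg ht j) (mem_univ i))

lemma p_succ_nonneg (ht : 1 ≤ t) (i : Fin N) : 0 ≤ H.p i (t + 1) := by
  rw [H.p_rec i t ht]
  exact div_nonneg (H.weight_nonneg ht i) (H.sum_weight_pos ht).le

lemma sum_p_succ (ht : 1 ≤ t) : ∑ i, H.p i (t + 1) = 1 := by
  simp_rw [H.p_rec _ t ht]
  rw [← sum_div]
  exact div_self (H.sum_weight_pos ht).ne'

lemma learner_loss_succ_le_one (ht : 1 ≤ t) : ∑ j, H.p j (t + 1) * H.loss j (t + 1) ≤ 1 :=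
  calc ∑ j, H.p j (t + 1) * H.loss j (t + 1) ≤ ∑ j, H.p j (t + 1) :=
        sum_le_sum fun j _ => mul_le_of_le_one_right (H.p_succ_nonneg ht j)
          (H.loss_mem j (t + 1) (by omega)).2
    _ = 1 := H.sum_p_succ ht

lemma max_R_succ_le (ht : 1 ≤ t) (i : Fin N) :
    max (H.R i (t + 1)) 0 ≤ max (H.R i t) 0 + 1 := by
  have hloss := (H.loss_mem i (t + 1) (by omega)).1
  refine max_le ?_ (by positivity)
  linarith [H.R_rec i t, H.learner_loss_succ_le_one ht, le_max_left (H.R i t) 0]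

end NormalHedge

/-- Lemma 2: under the NormalHedge dynamics, the scale grows at most geometrically:
for every round `t ≥ 1`, `c (t+1) ≤ 2 c t (1 + ln N) + 3`. -/
theorem normalHedge_scale_growth {N : ℕ} (H : NormalHedge N)
    (t : ℕ) (ht : 1 ≤ t) :
    H.c (t + 1) ≤ 2 * H.c t * (1 + Real.log N) + 3 := by
  obtain ⟨i, hi⟩ := H.exists_two_mul_c_le_sq (t := t + 1) (by omega)
  set x := max (H.R i t) 0
  have hx_sq := H.sq_max_R_le ht i
  have hsucc_sq : max (H.R i (t + 1)) 0 ^ 2 ≤ (x + 1) ^ 2 :=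
    pow_le_pow_left₀ (le_max_right _ _) (H.max_R_succ_le ht i) 2
  nlinarith [sq_nonneg (x - 1)]
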